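/- arXiv:2312.11838 — 4 statements merged into one kernel-verified Lean document; each statement's English description precedes it below -/
import Mathlib

section
/- Independence property of a uniform random H-perfect matching: Let (Ω, Pr) be a probability space, S a finite set, n ≥ 1, and X : Ω → (matrices of size n×n with entries in S) a random matrix. Let H ⊆ S and let α be a probability distribution on H. Assume (1) for every i,j ∈ {1,…,n}, Pr(X_{ij} ∈ H) > 0 and Pr(X_{ij} = x | X_{ij} ∈ H) = α(x) for every x ∈ H; (2) the n row vectors of X are mutually independent random vectors. Let ν = (ν_1,…,ν_n) be a random permutation of {1,…,n}, uniformly distributed over all n! permutations and independent of X. Then Pr(X_{ν_1,1} ∈ H, …, X_{ν_n,n} ∈ H) > 0, and for all subsets A_1,…,A_n ⊆ H it holds that Pr(X_{ν_1,1} ∈ A_1, …, X_{ν_n,n} ∈ A_n | X_{ν_1,1} ∈ H, …, X_{ν_n,n} ∈ H) = ∏_{k=1}^n α(A_k), where α(A_k) = ∑_{x ∈ A_k} α(x). In particular, conditioned on all selected entries falling in H, the values X_{ν_1,1},…,X_{ν_n,n} are mutually independent, each with distribution α. -/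
/-!
Conditioning on `ν = σ` and using that `ν` is independent of `X`, the event that the matching
`σ` selects entries in `A₁, …, Aₙ` has probability `∏ₖ Pr(X_{σₖ,k} ∈ Aₖ)` by independence of
the rows, and each factor is `α(Aₖ) · Pr(X_{σₖ,k} ∈ H)` by the anchoring. Hence
`Pr(∀ k, X_{νₖ,k} ∈ Aₖ) = ∏ₖ α(Aₖ) · w` with a weight `w` independent of the `Aₖ`; taking
`Aₖ = H` identifies `w` with the denominator, and `w > 0` because of the identity matching.

These events need not be measurable, so additivity of `μ` on them has to be earned: the fibres
of `ν` have total mass `1`, which makes them null-measurable, and the point masses of an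
anchored entry add up to `Pr(X_{ij} ∈ H)`.
-/

open MeasureTheory Finset

section
variable {Ω : Type*} [MeasurableSpace Ω] {μ : Measure Ω}

theorem nullMeasurableSet_of_measure_add_measure_compl_le [IsFiniteMeasure μ] {s : Set Ω}
    (h : μ s + μ sᶜ ≤ μ Set.univ) : NullMeasurableSet s μ := by
  set B := toMeasurable μ s
  set C := toMeasurable μ sᶜ
  have hBC : B ∪ C = Set.univ :=
    Set.eq_univ_of_forall fun ω ↦ (em (ω ∈ s)).imp (subset_toMeasurable μ s ·)
      (subset_toMeasurable μ sᶜ ·)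
  have hinter : μ (B ∩ C) = 0 := by
    have := measure_union_add_inter (μ := μ) B (measurableSet_toMeasurable μ sᶜ)
    rw [hBC, measure_toMeasurable, measure_toMeasurable] at this
    refine nonpos_iff_eq_zero.1 ((ENNReal.add_le_add_iff_left (measure_ne_top μ Set.univ)).1 ?_)
    rwa [add_zero, this]
  refine (measurableSet_toMeasurable μ s).nullMeasurableSet.congr ?_
  refine (ae_le_set.2 (measure_mono_null (fun ω hω ↦ ?_) hinter)).antisymm
    (LE.le.eventuallyLE (subset_toMeasurable μ s))
  exact ⟨hω.1, subset_toMeasurable μ sᶜ hω.2⟩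

theorem nullMeasurableSet_fiber_of_sum_measure_fiber_le [IsFiniteMeasure μ] {β : Type*}
    [Fintype β] [DecidableEq β] {f : Ω → β} (h : ∑ b, μ {ω | f ω = b} ≤ μ Set.univ) (b : β) :
    NullMeasurableSet {ω | f ω = b} μ := by
  refine nullMeasurableSet_of_measure_add_measure_compl_le (le_trans ?_ h)
  have hcompl : {ω | f ω = b}ᶜ = ⋃ c ∈ univ.erase b, {ω | f ω = c} := by
    ext ω; simp [eq_comm]
  rw [hcompl, ← add_sum_erase _ _ (mem_univ b)]
  gcongr
  exact measure_biUnion_finset_le _ _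

theorem measure_eq_sum_measure_inter_fiber {β : Type*} [Fintype β] {f : Ω → β}
    (hf : ∀ b, NullMeasurableSet {ω | f ω = b} μ) (F : Set Ω) :
    μ F = ∑ b, μ (F ∩ {ω | f ω = b}) := by
  have hdisj : Pairwise fun b c ↦ AEDisjoint μ {ω | f ω = b} {ω | f ω = c} :=
    fun b c hbc ↦ Disjoint.aedisjoint <| Set.disjoint_left.2
      fun ω (hb : f ω = b) (hc : f ω = c) ↦ hbc (hb.symm.trans hc)
  have hcover : (⋃ b, {ω | f ω = b}) = Set.univ := Set.iUnion_eq_univ_iff.2 fun ω ↦ ⟨f ω, rfl⟩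
  calc μ F = μ.restrict (⋃ b, {ω | f ω = b}) F := by rw [hcover, Measure.restrict_univ]
    _ = ∑ b, μ (F ∩ {ω | f ω = b}) := by
      rw [Measure.restrict_iUnion_ae hdisj hf, Measure.sum_apply_of_countable, tsum_fintype]
      exact sum_congr rfl fun b _ ↦ Measure.restrict_apply₀' (hf b)

theorem measure_mem_finset_eq_sum_of_sum_le {S : Type*} [DecidableEq S] {Y : Ω → S}
    {H : Finset S} (hH : ∑ x ∈ H, μ {ω | Y ω = x} ≤ μ {ω | Y ω ∈ H})
    (hfin : μ {ω | Y ω ∈ H} ≠ ⊤) {A : Finset S} (hA : A ⊆ H) :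
    μ {ω | Y ω ∈ A} = ∑ x ∈ A, μ {ω | Y ω = x} := by
  have hle : ∀ B : Finset S, μ {ω | Y ω ∈ B} ≤ ∑ x ∈ B, μ {ω | Y ω = x} := fun B ↦ by
    have hB : {ω | Y ω ∈ B} = ⋃ x ∈ B, {ω | Y ω = x} := by ext; simp
    exact hB ▸ measure_biUnion_finset_le _ _
  have hrest : ∑ x ∈ H \ A, μ {ω | Y ω = x} ≠ ⊤ :=
    ne_top_of_le_ne_top hfin ((sum_le_sum_of_subset sdiff_subset).trans hH)
  refine le_antisymm (hle A) (ENNReal.le_of_add_le_add_right hrest ?_)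
  calc ∑ x ∈ A, μ {ω | Y ω = x} + ∑ x ∈ H \ A, μ {ω | Y ω = x}
      = ∑ x ∈ H, μ {ω | Y ω = x} := by rw [add_comm, sum_sdiff hA]
    _ ≤ μ {ω | Y ω ∈ H} := hH
    _ ≤ μ ({ω | Y ω ∈ A} ∪ {ω | Y ω ∈ H \ A}) :=
      measure_mono fun ω (h : Y ω ∈ H) ↦ by by_cases Y ω ∈ A <;> simp_all
    _ ≤ μ {ω | Y ω ∈ A} + ∑ x ∈ H \ A, μ {ω | Y ω = x} := by
      grw [measure_union_le, hle (H \ A)]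

theorem measure_mem_eq_ofReal_sum_mul [IsFiniteMeasure μ] {S : Type*} [DecidableEq S]
    {Y : Ω → S} {H : Finset S} {α : S → ℝ} (hα0 : ∀ x, 0 ≤ α x) (hα1 : ∑ x ∈ H, α x = 1)
    (hcond : ∀ x ∈ H, μ ({ω | Y ω = x} ∩ {ω | Y ω ∈ H}) =
      ENNReal.ofReal (α x) * μ {ω | Y ω ∈ H})
    {A : Finset S} (hA : A ⊆ H) :
    μ {ω | Y ω ∈ A} = ENNReal.ofReal (∑ x ∈ A, α x) * μ {ω | Y ω ∈ H} := by
  have hsum : ∀ B ⊆ H, ∑ x ∈ B, μ {ω | Y ω = x} =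
      ENNReal.ofReal (∑ x ∈ B, α x) * μ {ω | Y ω ∈ H} := fun B hB ↦ by
    rw [ENNReal.ofReal_sum_of_nonneg fun x _ ↦ hα0 x, sum_mul]
    refine sum_congr rfl fun x hx ↦ ?_
    rw [← hcond x (hB hx), Set.inter_eq_left.2 (show {ω | Y ω = x} ⊆ {ω | Y ω ∈ H} from
      fun ω (h : Y ω = x) ↦ show Y ω ∈ H from h ▸ hB hx)]
  have hH : ∑ x ∈ H, μ {ω | Y ω = x} ≤ μ {ω | Y ω ∈ H} := by
    rw [hsum H subset_rfl, hα1, ENNReal.ofReal_one, one_mul]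
  rw [measure_mem_finset_eq_sum_of_sum_le hH (measure_ne_top μ _) hA, hsum A hA]

theorem measure_forall_perm_mem_eq_prod {ι κ S : Type*} [Fintype ι] [Fintype κ]
    {X : Ω → ι → κ → S}
    (hrows : ∀ A : ι → Set (κ → S), μ {ω | ∀ i, X ω i ∈ A i} = ∏ i, μ {ω | X ω i ∈ A i})
    (σ : κ ≃ ι) (T : κ → Set S) :
    μ {ω | ∀ k, X ω (σ k) k ∈ T k} = ∏ k, μ {ω | X ω (σ k) k ∈ T k} := by
  convert hrows fun i ↦ {v | v (σ.symm i) ∈ T (σ.symm i)} using 1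
  · congr 1
    ext ω
    exact σ.symm.forall_congr_right.symm.trans (by simp)
  · exact (σ.symm.prod_comp fun k ↦ μ {ω | X ω (σ k) k ∈ T k}).symm.trans (by simp)

theorem measure_forall_random_perm_mem_eq_ofReal_prod_mul [IsFiniteMeasure μ] {ι S : Type*}
    [Fintype ι] [DecidableEq ι] [DecidableEq S] {X : Ω → ι → ι → S} {ν : Ω → Equiv.Perm ι}
    {H : Finset S} {α : S → ℝ} (hα0 : ∀ x, 0 ≤ α x) (hα1 : ∑ x ∈ H, α x = 1)
    (hcond : ∀ i j, ∀ x ∈ H, μ ({ω | X ω i j = x} ∩ {ω | X ω i j ∈ H}) =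
      ENNReal.ofReal (α x) * μ {ω | X ω i j ∈ H})
    (hrows : ∀ A : ι → Set (ι → S), μ {ω | ∀ i, X ω i ∈ A i} = ∏ i, μ {ω | X ω i ∈ A i})
    (hν : ∀ σ, NullMeasurableSet {ω | ν ω = σ} μ)
    (hνindep : ∀ (σ : Equiv.Perm ι) (B : Set (ι → ι → S)),
      μ ({ω | ν ω = σ} ∩ {ω | X ω ∈ B}) = μ {ω | ν ω = σ} * μ {ω | X ω ∈ B})
    {A : ι → Finset S} (hA : ∀ k, A k ⊆ H) :
    μ {ω | ∀ k, X ω (ν ω k) k ∈ A k} = ENNReal.ofReal (∏ k, ∑ x ∈ A k, α x) *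
      ∑ σ, μ {ω | ν ω = σ} * ∏ k, μ {ω | X ω (σ k) k ∈ H} := by
  rw [measure_eq_sum_measure_inter_fiber hν, mul_sum]
  refine sum_congr rfl fun σ _ ↦ ?_
  have hfiber : {ω | ∀ k, X ω (ν ω k) k ∈ A k} ∩ {ω | ν ω = σ} =
      {ω | ν ω = σ} ∩ {ω | X ω ∈ {M | ∀ k, M (σ k) k ∈ A k}} := by
    ext ω
    simp only [Set.mem_inter_iff, Set.mem_ofPred_eq]
    constructor
    · rintro ⟨h, rfl⟩; exact ⟨rfl, h⟩
    · rintro ⟨rfl, h⟩; exact ⟨h, rfl⟩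
  rw [hfiber, hνindep]
  change _ * μ {ω | ∀ k, X ω (σ k) k ∈ (A k : Set S)} = _
  rw [measure_forall_perm_mem_eq_prod hrows σ]
  simp only [Finset.mem_coe]
  rw [prod_congr rfl fun k _ ↦ measure_mem_eq_ofReal_sum_mul (Y := fun ω ↦ X ω (σ k) k) hα0 hα1
    (hcond (σ k) k) (hA k), prod_mul_distrib,
    ENNReal.ofReal_prod_of_nonneg fun k _ ↦ sum_nonneg fun x _ ↦ hα0 x]
  ring

end

theorem independence_property_of_uniform_H_perfect_matching_general
    {Ω : Type*} [MeasurableSpace Ω] (μ : Measure Ω) [IsProbabilityMeasure μ]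
    {S : Type*} [Fintype S] [DecidableEq S]
    (n : ℕ)
    (X : Ω → Fin n → Fin n → S)
    (H : Finset S) (α : S → ℝ)
    (hα0 : ∀ x, 0 ≤ α x) (hα1 : ∑ x ∈ H, α x = 1)
    -- each entry lies in `H` with positive probability
    (hpos : ∀ i j : Fin n, μ {ω | X ω i j ∈ H} ≠ 0)
    -- conditional distribution of each entry, given that it lies in `H`, is `α`
    (hcond : ∀ i j : Fin n, ∀ x ∈ H,
      μ ({ω | X ω i j = x} ∩ {ω | X ω i j ∈ H}) =
        ENNReal.ofReal (α x) * μ {ω | X ω i j ∈ H})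
    -- the rows of `X` are mutually independent random vectors
    (hrows : ∀ A : Fin n → Set (Fin n → S),
      μ {ω | ∀ i, X ω i ∈ A i} = ∏ i, μ {ω | X ω i ∈ A i})
    -- `ν` is a uniformly distributed random permutation
    (ν : Ω → Equiv.Perm (Fin n))
    (hνunif : ∀ σ : Equiv.Perm (Fin n),
      μ {ω | ν ω = σ} = ((Nat.factorial n : ENNReal))⁻¹)
    -- `ν` is independent of `X`
    (hνindep : ∀ (σ : Equiv.Perm (Fin n)) (B : Set (Fin n → Fin n → S)),
      μ ({ω | ν ω = σ} ∩ {ω | X ω ∈ B}) = μ {ω | ν ω = σ} * μ {ω | X ω ∈ B}) :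
    μ {ω | ∀ k, X ω (ν ω k) k ∈ H} ≠ 0 ∧
    ∀ A : Fin n → Finset S, (∀ k, A k ⊆ H) →
      μ ({ω | ∀ k, X ω (ν ω k) k ∈ A k} ∩ {ω | ∀ k, X ω (ν ω k) k ∈ H}) /
          μ {ω | ∀ k, X ω (ν ω k) k ∈ H} =
        ENNReal.ofReal (∏ k, ∑ x ∈ A k, α x) := by
  have hνsum : ∑ σ, μ {ω | ν ω = σ} ≤ μ Set.univ := by
    simp only [hνunif, sum_const, card_univ, Fintype.card_perm, Fintype.card_fin, nsmul_eq_mul,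
      measure_univ]
    exact (ENNReal.mul_inv_cancel (by positivity) (ENNReal.natCast_ne_top _)).le
  have hmatch := fun A hA ↦ measure_forall_random_perm_mem_eq_ofReal_prod_mul hα0 hα1 hcond hrows
    (nullMeasurableSet_fiber_of_sum_measure_fiber_le hνsum) hνindep (A := A) hA
  set w := ∑ σ, μ {ω | ν ω = σ} * ∏ k, μ {ω | X ω (σ k) k ∈ H}
  have hden : μ {ω | ∀ k, X ω (ν ω k) k ∈ H} = w := by
    simpa [hα1] using hmatch (fun _ ↦ H) fun _ ↦ subset_rfl
  have hw : w ≠ 0 := by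
    refine sum_eq_zero_iff.not.2 fun h ↦ ?_
    refine mul_ne_zero ?_ (prod_ne_zero_iff.2 fun k _ ↦ hpos _ k) (h 1 (mem_univ _))
    simp [hνunif]
  refine ⟨hden ▸ hw, fun A hA ↦ ?_⟩
  have hsub : {ω | ∀ k, X ω (ν ω k) k ∈ A k} ⊆ {ω | ∀ k, X ω (ν ω k) k ∈ H} :=
    fun ω hω k ↦ hA k (hω k)
  rw [Set.inter_eq_left.2 hsub, hmatch A hA, hden,
    ENNReal.mul_div_cancel_right hw (hden ▸ measure_ne_top μ _)]

/-- **Independence property of a uniform random H-perfect matching.**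
Let `X : Ω → Fin n → Fin n → S` be a random `n×n` matrix over a finite set `S` which is
`(H,α)`-anchored: every entry lies in `H` with positive probability, the conditional
distribution of every entry given that it lies in `H` is `α`, and the rows of `X` are
mutually independent random vectors.  Let `ν` be a uniformly distributed random
permutation of `{1,…,n}`, independent of `X`.  Then the event that all the selected
entries `X_{ν_k,k}` lie in `H` has positive probability, and conditioned on this event
the selected values are i.i.d. with distribution `α`: for all `A₁,…,Aₙ ⊆ H`,
`Pr(∀ k, X_{ν_k,k} ∈ A_k | ∀ k, X_{ν_k,k} ∈ H) = ∏ k, α(A_k)`. -/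
theorem independence_property_of_uniform_H_perfect_matching
    {Ω : Type*} [MeasurableSpace Ω] (μ : Measure Ω) [IsProbabilityMeasure μ]
    {S : Type*} [Fintype S] [DecidableEq S]
    (n : ℕ) (hn : 1 ≤ n)
    (X : Ω → Fin n → Fin n → S)
    (H : Finset S) (α : S → ℝ)
    (hα0 : ∀ x, 0 ≤ α x) (hα1 : ∑ x ∈ H, α x = 1)
    -- each entry lies in `H` with positive probability
    (hpos : ∀ i j : Fin n, μ {ω | X ω i j ∈ H} ≠ 0)
    -- conditional distribution of each entry, given that it lies in `H`, is `α`
    (hcond : ∀ i j : Fin n, ∀ x ∈ H,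
      μ ({ω | X ω i j = x} ∩ {ω | X ω i j ∈ H}) =
        ENNReal.ofReal (α x) * μ {ω | X ω i j ∈ H})
    -- the rows of `X` are mutually independent random vectors
    (hrows : ∀ A : Fin n → Set (Fin n → S),
      μ {ω | ∀ i, X ω i ∈ A i} = ∏ i, μ {ω | X ω i ∈ A i})
    -- `ν` is a uniformly distributed random permutation
    (ν : Ω → Equiv.Perm (Fin n))
    (hνunif : ∀ σ : Equiv.Perm (Fin n),
      μ {ω | ν ω = σ} = ((Nat.factorial n : ENNReal))⁻¹)
    -- `ν` is independent of `X`
    (hνindep : ∀ (σ : Equiv.Perm (Fin n)) (B : Set (Fin n → Fin n → S)),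
      μ ({ω | ν ω = σ} ∩ {ω | X ω ∈ B}) = μ {ω | ν ω = σ} * μ {ω | X ω ∈ B}) :
    μ {ω | ∀ k, X ω (ν ω k) k ∈ H} ≠ 0 ∧
    ∀ A : Fin n → Finset S, (∀ k, A k ⊆ H) →
      μ ({ω | ∀ k, X ω (ν ω k) k ∈ A k} ∩ {ω | ∀ k, X ω (ν ω k) k ∈ H}) /
          μ {ω | ∀ k, X ω (ν ω k) k ∈ H} =
        ENNReal.ofReal (∏ k, ∑ x ∈ A k, α x) :=
  independence_property_of_uniform_H_perfect_matching_general μ n X H α hα0 hα1 hpos hcond hrows ν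
    hνunif hνindep
end

section
/- If a balanced bipartite graph has a Hall violator, then it has one of size at most ⌈n/2⌉: let B be a bipartite graph with bipartition (V₁, V₂), |V₁| = |V₂| = n. Call a set A a Hall violator if A ⊆ V₁ or A ⊆ V₂ and |A| > |Γ(A)|, where Γ(A) is the set of all vertices adjacent to at least one vertex of A. If B has a Hall violator, then B has a Hall violator A with |A| ≤ ⌈n/2⌉. -/
open Finset

lemma key_hall (n : ℕ) (S : Fin n → Fin n → Prop) [DecidableRel S]
    (h : ∃ A : Finset (Fin n), (univ.filter fun j => ∃ i ∈ A, S i j).card < A.card) :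
    (∃ A : Finset (Fin n), A.card ≤ (n + 1) / 2 ∧
        (univ.filter fun j => ∃ i ∈ A, S i j).card < A.card) ∨
    (∃ B : Finset (Fin n), B.card ≤ (n + 1) / 2 ∧
        (univ.filter fun i => ∃ j ∈ B, S i j).card < B.card) := by
  classical
  set V : Finset (Finset (Fin n)) :=
    univ.filter (fun A => (univ.filter fun j => ∃ i ∈ A, S i j).card < A.card) with hV
  have hVne : V.Nonempty := by
    obtain ⟨A, hA⟩ := h
    exact ⟨A, by simp [hV, hA]⟩
  obtain ⟨A, hAV, hmin⟩ := V.exists_min_image Finset.card hVne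
  have hA : (univ.filter fun j => ∃ i ∈ A, S i j).card < A.card := by
    simpa [hV] using hAV
  set Γ : Finset (Fin n) := univ.filter fun j => ∃ i ∈ A, S i j with hΓ
  -- minimality gives |Γ| = |A| - 1
  have hcard : Γ.card + 1 = A.card := by
    by_contra hne
    have hlt : Γ.card + 1 < A.card := by omega
    obtain ⟨a, ha⟩ : A.Nonempty := Finset.card_pos.mp (by omega)
    have hsub : (univ.filter fun j => ∃ i ∈ A.erase a, S i j) ⊆ Γ := by
      intro j hj
      simp only [hΓ, mem_filter, mem_univ, true_and] at hj ⊢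
      obtain ⟨i, hi, hij⟩ := hj
      exact ⟨i, Finset.mem_of_mem_erase hi, hij⟩
    have hAe : (A.erase a) ∈ V := by
      simp only [hV, mem_filter, mem_univ, true_and]
      calc (univ.filter fun j => ∃ i ∈ A.erase a, S i j).card
          ≤ Γ.card := Finset.card_le_card hsub
        _ < (A.erase a).card := by rw [Finset.card_erase_of_mem ha]; omega
    have := hmin _ hAe
    rw [Finset.card_erase_of_mem ha] at this
    omega
  by_cases hsmall : A.card ≤ (n + 1) / 2
  · exact Or.inl ⟨A, hsmall, hA⟩
  · -- B = complement of Γ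
    refine Or.inr ⟨Γᶜ, ?_, ?_⟩
    · have hAn : A.card ≤ n := by simpa using Finset.card_le_card (Finset.subset_univ A)
      rw [Finset.card_compl, Fintype.card_fin]
      omega
    · have hsub : (univ.filter fun i => ∃ j ∈ Γᶜ, S i j) ⊆ Aᶜ := by
        intro i hi
        simp only [mem_filter, mem_univ, true_and] at hi
        obtain ⟨j, hj, hij⟩ := hi
        rw [Finset.mem_compl]
        intro hiA
        rw [Finset.mem_compl] at hj
        exact hj (by simp only [hΓ, mem_filter, mem_univ, true_and]; exact ⟨i, hiA, hij⟩)
      have h1 : (univ.filter fun i => ∃ j ∈ Γᶜ, S i j).card ≤ n - A.card := by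
        have := Finset.card_le_card hsub
        rwa [Finset.card_compl, Fintype.card_fin] at this
      have h2 : Γᶜ.card = n - Γ.card := by
        rw [Finset.card_compl, Fintype.card_fin]
      have hΓn : Γ.card ≤ n := by simpa using Finset.card_le_card (Finset.subset_univ Γ)
      have hAn : A.card ≤ n := by simpa using Finset.card_le_card (Finset.subset_univ A)
      omega

/-- **Small Hall violators**: in a balanced bipartite graph with parts of size `n`
(given by the relation `R` between left and right vertices), if there is a Hall
violator — a subset `A` of one side with `|A| > |Γ(A)|` — then there is a Hall violator
of size at most `⌈n/2⌉`. -/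
theorem exists_small_hall_violator (n : ℕ) (R : Fin n → Fin n → Prop) [DecidableRel R]
    (h : (∃ A : Finset (Fin n),
            (univ.filter fun j => ∃ i ∈ A, R i j).card < A.card) ∨
         (∃ B : Finset (Fin n),
            (univ.filter fun i => ∃ j ∈ B, R i j).card < B.card)) :
    (∃ A : Finset (Fin n), A.card ≤ (n + 1) / 2 ∧
        (univ.filter fun j => ∃ i ∈ A, R i j).card < A.card) ∨
    (∃ B : Finset (Fin n), B.card ≤ (n + 1) / 2 ∧
        (univ.filter fun i => ∃ j ∈ B, R i j).card < B.card) := by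
  rcases h with ⟨A, hA⟩ | ⟨B, hB⟩
  · exact key_hall n R ⟨A, hA⟩
  · rcases key_hall n (fun i j => R j i) ⟨B, hB⟩ with ⟨A, h1, h2⟩ | ⟨C, h1, h2⟩
    · exact Or.inr ⟨A, h1, by simpa using h2⟩
    · exact Or.inl ⟨C, h1, by simpa using h2⟩
end

section
/- Union bound for the absence of a perfect matching in a random balanced bipartite graph: let n ≥ 1 and p ∈ (0,1), and let G(n,n,p) be the random bipartite graph with parts V₁, V₂ of size n in which each of the n² possible edges between V₁ and V₂ is present independently with probability p. Then, with q = 1 − p, Pr(G(n,n,p) has no perfect matching) ≤ 2·∑_{k=1}^{⌈n/2⌉} C(n,k)·C(n, n−k+1)·q^{k(n−k+1)}, where C(n,k) is the binomial coefficient. -/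
open MeasureTheory Finset

private lemma measure_coe_finset {Ω : Type*} [MeasurableSpace Ω]
    [MeasurableSingletonClass Ω] (μ : Measure Ω) (A : Finset Ω) :
    μ ↑A = ∑ a ∈ A, μ {a} := by
  have h : (↑A : Set Ω) = ⋃ a ∈ A, {a} := by ext x; simp
  rw [h, measure_biUnion_finset ?_ (fun a _ => measurableSet_singleton a)]
  intro x _ y _ hxy
  exact Set.disjoint_singleton.mpr hxy

private lemma measure_rect {n : ℕ} (p : ℝ) (hp0 : 0 ≤ p) (hp1 : p ≤ 1)
    (μ : Measure (Fin n → Fin n → Bool))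
    (hμ : ∀ a : Fin n → Fin n → Bool,
      μ {a} = ∏ i, ∏ j, ENNReal.ofReal (if a i j then p else 1 - p))
    (S T : Finset (Fin n)) :
    μ {ω | ∀ i ∈ S, ∀ j ∈ T, ω i j = false}
      = ENNReal.ofReal (1 - p) ^ (S.card * T.card) := by
  classical
  set w : Bool → ENNReal := fun b => ENNReal.ofReal (if b then p else 1 - p) with hw
  set t : Fin n → Fin n → Finset Bool :=
    fun i j => if i ∈ S then (if j ∈ T then {false} else Finset.univ) else Finset.univ with ht
  have hset : {ω : Fin n → Fin n → Bool | ∀ i ∈ S, ∀ j ∈ T, ω i j = false}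
      = ↑(Fintype.piFinset fun i => Fintype.piFinset (t i)) := by
    ext a
    constructor
    · intro h
      refine Finset.mem_coe.mpr (Fintype.mem_piFinset.mpr fun i =>
        Fintype.mem_piFinset.mpr fun j => ?_)
      simp only [ht]
      split_ifs with hi hj
      · simpa using h i hi j hj
      · simp
      · simp
    · intro h i hi j hj
      have h2 := Fintype.mem_piFinset.mp
        (Fintype.mem_piFinset.mp (Finset.mem_coe.mp h) i) j
      simpa [ht, hi, hj] using h2
  have hsum_univ : ∑ b ∈ (Finset.univ : Finset Bool), w b = 1 := by
    rw [Fintype.sum_bool]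
    have h1 : w true = ENNReal.ofReal p := by simp [hw]
    have h2 : w false = ENNReal.ofReal (1 - p) := by simp [hw]
    rw [h1, h2, ← ENNReal.ofReal_add hp0 (by linarith)]
    norm_num
  rw [hset, measure_coe_finset μ _]
  calc ∑ a ∈ Fintype.piFinset (fun i => Fintype.piFinset (t i)), μ {a}
      = ∑ a ∈ Fintype.piFinset (fun i => Fintype.piFinset (t i)),
          ∏ i, ∏ j, w (a i j) := by
        refine Finset.sum_congr rfl fun a _ => ?_
        exact hμ a
    _ = ∏ i, ∑ row ∈ Fintype.piFinset (t i), ∏ j, w (row j) := by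
        rw [Finset.prod_univ_sum]
    _ = ∏ i, ∏ j, ∑ b ∈ t i j, w b := by
        refine Finset.prod_congr rfl fun i _ => ?_
        rw [Finset.prod_univ_sum]
    _ = ∏ i, ∏ j, (if i ∈ S then (if j ∈ T then ENNReal.ofReal (1 - p) else 1) else 1) := by
        refine Finset.prod_congr rfl fun i _ => Finset.prod_congr rfl fun j _ => ?_
        simp only [ht]
        split_ifs with hi hj
        · simp [hw]
        · exact hsum_univ
        · exact hsum_univ
    _ = ENNReal.ofReal (1 - p) ^ (S.card * T.card) := by
        have hinner : ∀ i : Fin n,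
            (∏ j, if i ∈ S then (if j ∈ T then ENNReal.ofReal (1 - p) else 1) else 1)
            = (if i ∈ S then ENNReal.ofReal (1 - p) ^ T.card else 1) := by
          intro i
          by_cases hi : i ∈ S
          · simp only [hi, if_true]
            rw [Finset.prod_ite_mem, Finset.univ_inter, Finset.prod_const]
          · simp [hi]
        simp only [hinner]
        rw [Finset.prod_ite_mem, Finset.univ_inter, Finset.prod_const, ← pow_mul,
          mul_comm T.card S.card]

private lemma exists_bad_sets {n : ℕ} (ω : Fin n → Fin n → Bool)
    (h : ¬ ∃ σ : Equiv.Perm (Fin n), ∀ j, ω (σ j) j = true) :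
    ∃ S T : Finset (Fin n), 1 ≤ S.card ∧ S.card ≤ (n + 1) / 2 ∧
      T.card = n - S.card + 1 ∧
      ((∀ i ∈ S, ∀ j ∈ T, ω i j = false) ∨ (∀ i ∈ S, ∀ j ∈ T, ω j i = false)) := by
  classical
  set r : Fin n → Finset (Fin n) :=
    fun j => Finset.univ.filter (fun i => ω i j = true) with hr
  have hhall : ¬ ∀ A : Finset (Fin n), A.card ≤ (A.biUnion r).card := by
    intro hc
    obtain ⟨f, hfinj, hfr⟩ :=
      (Finset.all_card_le_biUnion_card_iff_existsInjective' r).mp hc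
    have hbij : Function.Bijective f := Finite.injective_iff_bijective.mp hfinj
    refine h ⟨Equiv.ofBijective f hbij, fun j => ?_⟩
    have := hfr j
    simpa [hr] using this
  push_neg at hhall
  obtain ⟨A, hA⟩ := hhall
  have hkn : A.card ≤ n := by
    have := A.card_le_univ
    simpa using this
  have hk1 : 1 ≤ A.card := by omega
  set N := A.biUnion r with hN
  obtain ⟨T, hTsub, hTcard⟩ := Finset.exists_subset_card_eq
    (show n - A.card + 1 ≤ Nᶜ.card by
      rw [Finset.card_compl, Fintype.card_fin]; omega)
  have hfalse : ∀ s ∈ A, ∀ t ∈ T, ω t s = false := by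
    intro s hs t ht
    by_contra hne
    have htrue : ω t s = true := by
      cases h' : ω t s
      · exact absurd h' hne
      · rfl
    have hmem : t ∈ N := Finset.mem_biUnion.mpr ⟨s, hs, by simp [hr, htrue]⟩
    exact (Finset.mem_compl.mp (hTsub ht)) hmem
  by_cases hsmall : A.card ≤ (n + 1) / 2
  · exact ⟨A, T, hk1, hsmall, hTcard, Or.inr (fun i hi j hj => hfalse i hi j hj)⟩
  · refine ⟨T, A, ?_, ?_, ?_, Or.inl (fun i hi j hj => hfalse j hj i hi)⟩
    · omega
    · omega
    · omega

/-- **Union bound for the absence of a perfect matching in `G(n,n,p)`**: if each of the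
`n²` possible edges of a balanced bipartite graph on parts of size `n` (encoded as a
random 0–1 matrix `ω : Fin n → Fin n → Bool` with i.i.d. Bernoulli(`p`) entries) is
present independently with probability `p`, then, with `q = 1 − p`,
`Pr(no perfect matching) ≤ 2·∑_{k=1}^{⌈n/2⌉} C(n,k)·C(n,n−k+1)·q^{k(n−k+1)}`. -/
theorem random_bipartite_no_pm_union_bound
    (n : ℕ) (hn : 1 ≤ n) (p : ℝ) (hp0 : 0 < p) (hp1 : p < 1)
    (μ : Measure (Fin n → Fin n → Bool)) [IsProbabilityMeasure μ]
    -- the entries are i.i.d. Bernoulli(`p`)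
    (hμ : ∀ a : Fin n → Fin n → Bool,
      μ {a} = ∏ i, ∏ j, ENNReal.ofReal (if a i j then p else 1 - p)) :
    μ {ω | ¬ ∃ σ : Equiv.Perm (Fin n), ∀ j, ω (σ j) j = true} ≤
      ENNReal.ofReal (2 * ∑ k ∈ Finset.Icc 1 ((n + 1) / 2),
        (n.choose k : ℝ) * (n.choose (n - k + 1) : ℝ) * (1 - p) ^ (k * (n - k + 1))) := by
  classical
  have hq0 : (0 : ℝ) ≤ 1 - p := by linarith
  set q : ENNReal := ENNReal.ofReal (1 - p) with hqdef
  set Erow : Finset (Fin n) → Finset (Fin n) → Set (Fin n → Fin n → Bool) :=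
    fun S T => {ω | ∀ i ∈ S, ∀ j ∈ T, ω i j = false} with hErow
  set Ecol : Finset (Fin n) → Finset (Fin n) → Set (Fin n → Fin n → Bool) :=
    fun S T => {ω | ∀ i ∈ S, ∀ j ∈ T, ω j i = false} with hEcol
  have hrow : ∀ S T : Finset (Fin n), μ (Erow S T) = q ^ (S.card * T.card) :=
    fun S T => measure_rect p hp0.le hp1.le μ hμ S T
  have hcol : ∀ S T : Finset (Fin n), μ (Ecol S T) = q ^ (S.card * T.card) := by
    intro S T
    have heq : Ecol S T = Erow T S := by
      ext ω
      simp only [hEcol, hErow, Set.mem_setOf_eq]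
      exact ⟨fun h i hi j hj => h j hj i hi, fun h i hi j hj => h j hj i hi⟩
    rw [heq, hrow, mul_comm]
  set I : ℕ → Finset (Finset (Fin n) × Finset (Fin n)) :=
    fun k => Finset.powersetCard k Finset.univ ×ˢ
      Finset.powersetCard (n - k + 1) Finset.univ with hI
  have hsub : {ω : Fin n → Fin n → Bool |
        ¬ ∃ σ : Equiv.Perm (Fin n), ∀ j, ω (σ j) j = true} ⊆
      ⋃ k ∈ Finset.Icc 1 ((n + 1) / 2), ⋃ ST ∈ I k, (Erow ST.1 ST.2 ∪ Ecol ST.1 ST.2) := by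
    intro ω hω
    obtain ⟨S, T, h1, h2, hT, hor⟩ := exists_bad_sets ω hω
    refine Set.mem_biUnion (Finset.mem_Icc.mpr ⟨h1, h2⟩) ?_
    refine Set.mem_biUnion (x := (S, T)) ?_ ?_
    · exact Finset.mem_product.mpr ⟨Finset.mem_powersetCard_univ.mpr rfl,
        Finset.mem_powersetCard_univ.mpr hT⟩
    · rcases hor with h | h
      · exact Or.inl h
      · exact Or.inr h
  refine (measure_mono hsub).trans ?_
  have step1 : μ (⋃ k ∈ Finset.Icc 1 ((n + 1) / 2),
        ⋃ ST ∈ I k, (Erow ST.1 ST.2 ∪ Ecol ST.1 ST.2)) ≤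
      ∑ k ∈ Finset.Icc 1 ((n + 1) / 2), ∑ ST ∈ I k,
        (2 * q ^ (k * (n - k + 1))) := by
    refine (measure_biUnion_finset_le _ _).trans ?_
    refine Finset.sum_le_sum fun k _ => ?_
    refine (measure_biUnion_finset_le _ _).trans ?_
    refine Finset.sum_le_sum fun ST hST => ?_
    obtain ⟨hS, hT⟩ := Finset.mem_product.mp hST
    have hSc := Finset.mem_powersetCard_univ.mp hS
    have hTc := Finset.mem_powersetCard_univ.mp hT
    calc μ (Erow ST.1 ST.2 ∪ Ecol ST.1 ST.2) ≤ μ (Erow ST.1 ST.2) + μ (Ecol ST.1 ST.2) :=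
          measure_union_le _ _
      _ = 2 * q ^ (k * (n - k + 1)) := by
          rw [hrow, hcol, hSc, hTc, two_mul]
  refine step1.trans ?_
  rw [ENNReal.ofReal_mul (by norm_num), ENNReal.ofReal_sum_of_nonneg (fun k _ => by
    apply mul_nonneg (mul_nonneg (Nat.cast_nonneg _) (Nat.cast_nonneg _))
    exact pow_nonneg hq0 _), Finset.mul_sum]
  refine le_of_eq (Finset.sum_congr rfl fun k hk => ?_)
  rw [Finset.sum_const, hI]
  rw [Finset.card_product, Finset.card_powersetCard, Finset.card_powersetCard,
    Finset.card_univ, Fintype.card_fin]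
  rw [nsmul_eq_mul]
  rw [ENNReal.ofReal_mul (by positivity), ENNReal.ofReal_mul (Nat.cast_nonneg _),
    ENNReal.ofReal_pow hq0, ENNReal.ofReal_natCast, ENNReal.ofReal_natCast]
  push_cast
  rw [show ENNReal.ofReal 2 = 2 by norm_num]
  ring
end

section
/- Let n ≥ 1 and p ∈ (0,1), and let G(n,n,p) be the random bipartite graph with parts of size n in which each of the n² possible edges is present independently with probability p. Then Pr(G(n,n,p) has a perfect matching) ≥ 1 − (n+1)³·(1−p)^{⌊n/2⌋}. -/
/-!
By the Frobenius–König form of Hall's theorem, a square 0–1 matrix of order `n` without a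
permutation of ones has an `a × b` zero block with `a + b = n + 1`. A fixed such block is zero
with probability `q^(ab)`, `q = 1 - p`, and there are `C(n,a) C(n,b)` of them. If `a = k + 1 ≤ b`,
then `b ≥ ⌊n/2⌋` and `C(n,a) C(n,b) = C(n,k+1) C(n,k) ≤ (n+1)^(2k+1)`, so the blocks of this
size contribute at most `(n+1) q^⌊n/2⌋ ((n+1)^2 q^⌊n/2⌋)^k ≤ (n+1) q^⌊n/2⌋` whenever the claimed
bound is nontrivial. Summing over the `n` sizes gives the union bound `(n+1)^3 q^⌊n/2⌋`.
-/

open MeasureTheory Finset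

theorem cast_choose_le_add_one_pow (n k : ℕ) : (n.choose k : ℝ) ≤ ((n : ℝ) + 1) ^ k := by
  exact_mod_cast (n.choose_le_pow k).trans (Nat.pow_le_pow_left n.le_succ k)

theorem choose_mul_choose_mul_pow_le {n a b : ℕ} (hab : a + b = n + 1) (ha : 1 ≤ a)
    (hb : 1 ≤ b) {q : ℝ} (hq0 : 0 ≤ q) (hq1 : q ≤ 1)
    (hsmall : ((n : ℝ) + 1) ^ 2 * q ^ (n / 2) ≤ 1) :
    (n.choose a : ℝ) * n.choose b * q ^ (a * b) ≤ ((n : ℝ) + 1) * q ^ (n / 2) := by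
  wlog hle : a ≤ b generalizing a b
  · simpa only [mul_comm] using this (b := a) (by omega) hb ha (by omega)
  obtain ⟨k, rfl⟩ : ∃ k, a = k + 1 := ⟨a - 1, by omega⟩
  have hchoose : n.choose b = n.choose k := by
    rw [← Nat.choose_symm (by omega : b ≤ n)]; congr 1; omega
  have hpow : q ^ ((k + 1) * b) ≤ q ^ (n / 2 * (k + 1)) :=
    pow_le_pow_of_le_one hq0 hq1 (by rw [mul_comm]; gcongr; omega)
  calc (n.choose (k + 1) : ℝ) * n.choose b * q ^ ((k + 1) * b)
      ≤ ((n : ℝ) + 1) ^ (k + 1) * ((n : ℝ) + 1) ^ k * q ^ (n / 2 * (k + 1)) := by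
        rw [hchoose]
        gcongr
        exacts [cast_choose_le_add_one_pow n _, cast_choose_le_add_one_pow n _]
    _ = ((n : ℝ) + 1) * q ^ (n / 2) * (((n : ℝ) + 1) ^ 2 * q ^ (n / 2)) ^ k := by
        rw [mul_pow, ← pow_mul, ← pow_mul]; ring
    _ ≤ ((n : ℝ) + 1) * q ^ (n / 2) :=
        mul_le_of_le_one_right (by positivity) (pow_le_one₀ (by positivity) hsmall)

theorem sum_piFinset_ite_prod_eq_pow {ι γ R : Type*} [Fintype ι] [DecidableEq ι] [Fintype γ]
    [CommSemiring R] (s : Finset ι) (t : Finset γ) (w : γ → R) (hw : ∑ c, w c = 1) :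
    ∑ x ∈ Fintype.piFinset (fun i => if i ∈ s then t else univ), ∏ i, w (x i) =
      (∑ c ∈ t, w c) ^ #s := by
  rw [← prod_univ_sum]
  simp only [apply_ite (fun u : Finset γ => ∑ c ∈ u, w c), hw, prod_ite_mem, univ_inter,
    prod_const]

theorem exists_zeroBlock_of_not_exists_perm {α : Type*} [Fintype α]
    (r : α → α → Prop) (h : ¬ ∃ σ : Equiv.Perm α, ∀ j, r (σ j) j) :
    ∃ A B : Finset α, #A + #B = Fintype.card α + 1 ∧ ∀ i ∈ A, ∀ j ∈ B, ¬ r i j := by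
  classical
  obtain ⟨B, hB⟩ : ∃ B : Finset α, #{i | ∃ j ∈ B, r i j} < #B := by
    by_contra! hall
    obtain ⟨f, hf, hr⟩ :=
      (Fintype.all_card_le_filter_rel_iff_exists_injective fun j i => r i j).1 hall
    exact h ⟨Equiv.ofBijective f hf.bijective_of_finite, hr⟩
  have hA : Fintype.card α + 1 - #B ≤ #({i | ∃ j ∈ B, r i j} : Finset α)ᶜ := by
    rw [card_compl]; have := card_le_univ B; omega
  obtain ⟨A, hAsub, hAcard⟩ := exists_subset_card_eq hA
  refine ⟨A, B, by have := card_le_univ B; omega, fun i hi j hj hij => ?_⟩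
  exact mem_compl.1 (hAsub hi) (mem_filter.2 ⟨mem_univ _, j, hj, hij⟩)

def zeroBlock {α β : Type*} (A : Finset α) (B : Finset β) : Set (α → β → Bool) :=
  {ω | ∀ i ∈ A, ∀ j ∈ B, ω i j = false}

section Bernoulli

variable {α β : Type*} [Fintype α] [Fintype β] [DecidableEq α] [DecidableEq β]
  {p : ℝ} {μ : Measure (α → β → Bool)}

theorem zeroBlock_eq_piFinset (A : Finset α) (B : Finset β) :
    zeroBlock A B = ↑(Fintype.piFinset fun i =>
      if i ∈ A then Fintype.piFinset (fun j => if j ∈ B then {false} else univ) else univ) := by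
  ext ω
  simp only [zeroBlock, Set.mem_ofPred_eq, mem_coe, Fintype.mem_piFinset]
  refine forall_congr' fun i => ?_
  by_cases hi : i ∈ A
  · simp only [hi, true_imp_iff, if_true, Fintype.mem_piFinset]
    exact forall_congr' fun j => by by_cases hj : j ∈ B <;> simp [hj]
  · simp [hi]

theorem measure_zeroBlock (hp0 : 0 ≤ p) (hp1 : p ≤ 1)
    (hμ : ∀ a : α → β → Bool,
      μ {a} = ∏ i, ∏ j, ENNReal.ofReal (if a i j then p else 1 - p))
    (A : Finset α) (B : Finset β) :
    μ (zeroBlock A B) = ENNReal.ofReal ((1 - p) ^ (#A * #B)) := by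
  set w : Bool → ENNReal := fun b => ENNReal.ofReal (if b then p else 1 - p)
  have hw : ∑ b, w b = 1 := by
    simp [w, ← ENNReal.ofReal_add hp0 (sub_nonneg.2 hp1)]
  have hrow : ∑ r : β → Bool, ∏ j, w (r j) = 1 := by
    rw [← Fintype.prod_sum, hw, prod_const_one]
  rw [zeroBlock_eq_piFinset, ← sum_measure_singleton]
  simp only [hμ]
  rw [sum_piFinset_ite_prod_eq_pow _ _ (fun r : β → Bool => ∏ j, w (r j)) hrow,
    sum_piFinset_ite_prod_eq_pow _ _ w hw, sum_singleton, ← pow_mul, mul_comm,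
    ENNReal.ofReal_pow (sub_nonneg.2 hp1)]
  rfl

theorem measure_biUnion_zeroBlock_le (hp0 : 0 ≤ p) (hp1 : p ≤ 1)
    (hμ : ∀ a : α → β → Bool,
      μ {a} = ∏ i, ∏ j, ENNReal.ofReal (if a i j then p else 1 - p))
    (a b : ℕ) :
    μ (⋃ A ∈ powersetCard a (univ : Finset α), ⋃ B ∈ powersetCard b (univ : Finset β),
        zeroBlock A B) ≤
      ENNReal.ofReal
        ((Fintype.card α).choose a * (Fintype.card β).choose b * (1 - p) ^ (a * b)) := by
  calc _ ≤ ∑ A ∈ powersetCard a (univ : Finset α), ∑ B ∈ powersetCard b (univ : Finset β),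
          μ (zeroBlock A B) :=
        (measure_biUnion_finset_le _ _).trans
          (sum_le_sum fun _ _ => measure_biUnion_finset_le _ _)
    _ = _ := by
        rw [sum_congr rfl fun A hA => sum_congr rfl fun B hB => by
          rw [measure_zeroBlock hp0 hp1 hμ, mem_powersetCard_univ.1 hA,
            mem_powersetCard_univ.1 hB]]
        simp [ENNReal.ofReal_mul, mul_assoc, sub_nonneg.2 hp1]

end Bernoulli

theorem measure_not_exists_perm_le {n : ℕ} {p : ℝ} (hp0 : 0 ≤ p) (hp1 : p ≤ 1)
    {μ : Measure (Fin n → Fin n → Bool)}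
    (hμ : ∀ a : Fin n → Fin n → Bool,
      μ {a} = ∏ i, ∏ j, ENNReal.ofReal (if a i j then p else 1 - p))
    (hsmall : ((n : ℝ) + 1) ^ 2 * (1 - p) ^ (n / 2) ≤ 1) :
    μ {ω | ∃ σ : Equiv.Perm (Fin n), ∀ j, ω (σ j) j = true}ᶜ ≤
      ENNReal.ofReal (n * (((n : ℝ) + 1) * (1 - p) ^ (n / 2))) := by
  have hsub : {ω : Fin n → Fin n → Bool | ∃ σ : Equiv.Perm (Fin n), ∀ j, ω (σ j) j = true}ᶜ ⊆
      ⋃ a ∈ Icc 1 n, ⋃ A ∈ powersetCard a (univ : Finset (Fin n)),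
        ⋃ B ∈ powersetCard (n + 1 - a) (univ : Finset (Fin n)), zeroBlock A B := by
    intro ω hω
    obtain ⟨A, B, hcard, hAB⟩ :=
      exists_zeroBlock_of_not_exists_perm (fun i j => ω i j = true) hω
    have hA := card_le_univ A
    have hB := card_le_univ B
    simp only [Fintype.card_fin] at hcard hA hB
    simp only [Set.mem_iUnion, mem_Icc, mem_powersetCard_univ]
    exact ⟨#A, ⟨by omega, hA⟩, A, rfl, B, by omega,
      fun i hi j hj => by simpa using hAB i hi j hj⟩
  calc _ ≤ ∑ a ∈ Icc 1 n, μ (⋃ A ∈ powersetCard a (univ : Finset (Fin n)),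
          ⋃ B ∈ powersetCard (n + 1 - a) (univ : Finset (Fin n)), zeroBlock A B) :=
        (measure_mono hsub).trans (measure_biUnion_finset_le _ _)
    _ ≤ ∑ a ∈ Icc 1 n, ENNReal.ofReal (((n : ℝ) + 1) * (1 - p) ^ (n / 2)) := by
        refine sum_le_sum fun a ha => (measure_biUnion_zeroBlock_le hp0 hp1 hμ _ _).trans ?_
        rw [mem_Icc] at ha
        simpa using ENNReal.ofReal_le_ofReal <| choose_mul_choose_mul_pow_le
          (by omega : a + (n + 1 - a) = n + 1) ha.1 (by omega) (sub_nonneg.2 hp1)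
          (by linarith) hsmall
    _ = _ := by simp [ENNReal.ofReal_mul]

theorem random_bipartite_pm_probability_general
    (n : ℕ) (p : ℝ) (hp0 : 0 < p) (hp1 : p < 1)
    (μ : Measure (Fin n → Fin n → Bool)) [IsProbabilityMeasure μ]
    -- the entries are i.i.d. Bernoulli(`p`)
    (hμ : ∀ a : Fin n → Fin n → Bool,
      μ {a} = ∏ i, ∏ j, ENNReal.ofReal (if a i j then p else 1 - p)) :
    ENNReal.ofReal (1 - ((n : ℝ) + 1) ^ 3 * (1 - p) ^ (n / 2)) ≤
      μ {ω | ∃ σ : Equiv.Perm (Fin n), ∀ j, ω (σ j) j = true} := by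
  set S := {ω : Fin n → Fin n → Bool | ∃ σ : Equiv.Perm (Fin n), ∀ j, ω (σ j) j = true}
  by_cases hlarge : 1 ≤ ((n : ℝ) + 1) ^ 3 * (1 - p) ^ (n / 2)
  · rw [ENNReal.ofReal_eq_zero.2 (by linarith)]
    exact zero_le
  have hq : 0 ≤ (1 - p) ^ (n / 2) := pow_nonneg (by linarith) _
  have hn : ((n : ℝ) + 1) ^ 2 ≤ ((n : ℝ) + 1) ^ 3 :=
    pow_le_pow_right₀ (by simp) (by norm_num)
  have hbad : μ Sᶜ ≤ ENNReal.ofReal (((n : ℝ) + 1) ^ 3 * (1 - p) ^ (n / 2)) := by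
    refine (measure_not_exists_perm_le hp0.le hp1.le hμ (by nlinarith)).trans
      (ENNReal.ofReal_le_ofReal ?_)
    nlinarith
  rw [ENNReal.ofReal_sub _ (by positivity), ENNReal.ofReal_one, tsub_le_iff_right,
    ← prob_add_prob_compl (μ := μ) (Set.toFinite S).measurableSet]
  exact add_le_add_right hbad _

/-- **`G(n,n,p)` has a perfect matching with high probability**: if each of the `n²`
possible edges of a balanced bipartite graph on parts of size `n` (encoded as a random
0–1 matrix `ω : Fin n → Fin n → Bool` with i.i.d. Bernoulli(`p`) entries) is present
independently with probability `p`, then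
`Pr(perfect matching exists) ≥ 1 − (n+1)³·(1−p)^{⌊n/2⌋}`. -/
theorem random_bipartite_pm_probability
    (n : ℕ) (hn : 1 ≤ n) (p : ℝ) (hp0 : 0 < p) (hp1 : p < 1)
    (μ : Measure (Fin n → Fin n → Bool)) [IsProbabilityMeasure μ]
    -- the entries are i.i.d. Bernoulli(`p`)
    (hμ : ∀ a : Fin n → Fin n → Bool,
      μ {a} = ∏ i, ∏ j, ENNReal.ofReal (if a i j then p else 1 - p)) :
    ENNReal.ofReal (1 - ((n : ℝ) + 1) ^ 3 * (1 - p) ^ (n / 2)) ≤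
      μ {ω | ∃ σ : Equiv.Perm (Fin n), ∀ j, ω (σ j) j = true} :=
  random_bipartite_pm_probability_general n p hp0 hp1 μ hμ
end
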